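/- arXiv:2207.06663 — 2 statements merged into one kernel-verified Lean document; each statement's English description precedes it below -/
import Mathlib

section
/- For integer m ≥ 1, the confluent hypergeometric function satisfies ₁F₁(m, 1, x) = e^x · Σ_{i=0}^{m-1} (m-1)! / ((m-1-i)! · (i!)²) · x^i for all real x. -/
open Real Finset

/-- Confluent hypergeometric function ₁F₁(a, b, x) = Σ (a)_i / (i! (b)_i) x^i. -/
noncomputable def hyp1F1 (a b x : ℝ) : ℝ :=
  ∑' i : ℕ, ((ascPochhammer ℝ i).eval a / ((i.factorial : ℝ) * (ascPochhammer ℝ i).eval b)) * x ^ i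

/-- Vandermonde's identity in the needed form. -/
lemma vandermonde_aux (k n : ℕ) :
    ∑ i ∈ Finset.range (n + 1), k.choose i * n.choose i = (k + n).choose n := by
  rw [Nat.add_choose_eq, Finset.Nat.sum_antidiagonal_eq_sum_range_succ
    (fun i j => k.choose i * n.choose j)]
  refine Finset.sum_congr rfl fun i hi => ?_
  rw [Nat.choose_symm (Nat.lt_succ_iff.mp (Finset.mem_range.mp hi))]

/-- Key combinatorial identity. -/
lemma key_sum (k n : ℕ) (x : ℝ) :
    ∑ i ∈ Finset.range (k + 1),
      (if i ≤ n then (k.factorial : ℝ) / (((k - i).factorial : ℝ) * ((i.factorial : ℝ))^2)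
        * x ^ n / ((n - i).factorial : ℝ) else 0)
    = ((k + n).factorial : ℝ) / ((k.factorial : ℝ) * ((n.factorial : ℝ))^2) * x ^ n := by
  have hstep : ∀ i ∈ Finset.range (k + 1),
      (if i ≤ n then (k.factorial : ℝ) / (((k - i).factorial : ℝ) * ((i.factorial : ℝ))^2)
        * x ^ n / ((n - i).factorial : ℝ) else 0)
      = ((k.choose i * n.choose i : ℕ) : ℝ) / (n.factorial : ℝ) * x ^ n := by
    intro i hi
    have hik : i ≤ k := Nat.lt_succ_iff.mp (Finset.mem_range.mp hi)
    by_cases hin : i ≤ n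
    · rw [if_pos hin]
      rw [Nat.cast_mul, Nat.cast_choose ℝ hik, Nat.cast_choose ℝ hin]
      have h1 : ((k - i).factorial : ℝ) ≠ 0 := Nat.cast_ne_zero.mpr (Nat.factorial_ne_zero _)
      have h2 : ((i.factorial : ℝ)) ≠ 0 := Nat.cast_ne_zero.mpr (Nat.factorial_ne_zero _)
      have h3 : ((n - i).factorial : ℝ) ≠ 0 := Nat.cast_ne_zero.mpr (Nat.factorial_ne_zero _)
      have h4 : ((n.factorial : ℝ)) ≠ 0 := Nat.cast_ne_zero.mpr (Nat.factorial_ne_zero _)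
      have h5 : ((k.factorial : ℝ)) ≠ 0 := Nat.cast_ne_zero.mpr (Nat.factorial_ne_zero _)
      field_simp
    · rw [if_neg hin, Nat.choose_eq_zero_of_lt (Nat.lt_of_not_le hin)]
      simp
  rw [Finset.sum_congr rfl hstep]
  have hext : ∑ i ∈ Finset.range (k + 1), ((k.choose i * n.choose i : ℕ) : ℝ) / (n.factorial : ℝ) * x ^ n
      = ∑ i ∈ Finset.range (k + n + 1), ((k.choose i * n.choose i : ℕ) : ℝ) / (n.factorial : ℝ) * x ^ n := by
    refine Finset.sum_subset ?_ ?_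
    · exact Finset.range_subset_range.mpr (by omega)
    · intro i _ hi
      have : k < i := by simp only [Finset.mem_range] at hi ⊢; omega
      rw [Nat.choose_eq_zero_of_lt this]
      simp
  have hext2 : ∑ i ∈ Finset.range (n + 1), ((k.choose i * n.choose i : ℕ) : ℝ) / (n.factorial : ℝ) * x ^ n
      = ∑ i ∈ Finset.range (k + n + 1), ((k.choose i * n.choose i : ℕ) : ℝ) / (n.factorial : ℝ) * x ^ n := by
    refine Finset.sum_subset ?_ ?_
    · exact Finset.range_subset_range.mpr (by omega)
    · intro i _ hi
      have : n < i := by simp only [Finset.mem_range] at hi ⊢; omega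
      rw [Nat.choose_eq_zero_of_lt this, Nat.mul_zero]
      simp
  rw [hext, ← hext2, ← Finset.sum_mul, ← Finset.sum_div, ← Nat.cast_sum,
    vandermonde_aux, Nat.cast_choose ℝ (Nat.le_add_left n k), Nat.add_sub_cancel]
  ring

theorem stmt0 (m : ℕ) (hm : 1 ≤ m) (x : ℝ) :
    hyp1F1 (m : ℝ) 1 x =
      Real.exp x * ∑ i ∈ Finset.range m,
        ((m - 1).factorial : ℝ) / (((m - 1 - i).factorial : ℝ) * ((i.factorial : ℝ))^2) * x ^ i := by
  obtain ⟨k, rfl⟩ : ∃ k, m = k + 1 := ⟨m - 1, (Nat.succ_pred_eq_of_pos hm).symm⟩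
  simp only [Nat.add_sub_cancel]
  -- LHS as explicit tsum
  have hLHS : hyp1F1 ((k + 1 : ℕ) : ℝ) 1 x
      = ∑' n : ℕ, ((k + n).factorial : ℝ) / ((k.factorial : ℝ) * ((n.factorial : ℝ))^2) * x ^ n := by
    unfold hyp1F1
    refine tsum_congr fun n => ?_
    have hev : (ascPochhammer ℝ n).eval (((k + 1 : ℕ) : ℝ))
        = ((k + n).factorial : ℝ) / (k.factorial : ℝ) := by
      rw [eq_div_iff (Nat.cast_ne_zero.mpr (Nat.factorial_ne_zero k)), mul_comm]
      push_cast
      exact_mod_cast factorial_mul_ascPochhammer ℝ k n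
    rw [hev, ascPochhammer_eval_one]
    ring
  rw [hLHS]
  -- the summand family
  set F : ℕ → ℕ → ℝ := fun i n =>
    if i ≤ n then (k.factorial : ℝ) / (((k - i).factorial : ℝ) * ((i.factorial : ℝ))^2)
      * x ^ n / ((n - i).factorial : ℝ) else 0 with hF
  have hsummand : ∀ i, Summable (fun j : ℕ => x ^ j / (j.factorial : ℝ)
      * ((k.factorial : ℝ) / (((k - i).factorial : ℝ) * ((i.factorial : ℝ))^2) * x ^ i)) :=
    fun i => (Real.summable_pow_div_factorial x).mul_right _
  have hcomp : ∀ i, (fun j : ℕ => x ^ j / (j.factorial : ℝ)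
      * ((k.factorial : ℝ) / (((k - i).factorial : ℝ) * ((i.factorial : ℝ))^2) * x ^ i))
      = (fun j : ℕ => F i (j + i)) := by
    intro i
    funext j
    simp only [hF, if_pos (Nat.le_add_left i j), Nat.add_sub_cancel, pow_add]
    ring
  have hinj : ∀ i : ℕ, Function.Injective (fun j : ℕ => j + i) :=
    fun i => add_left_injective i
  have hsupp : ∀ i : ℕ, Function.support (F i) ⊆ Set.range (fun j : ℕ => j + i) := by
    intro i n hn
    by_contra hc
    apply hn
    have : ¬ i ≤ n := by
      intro hle
      exact hc ⟨n - i, show n - i + i = n by omega⟩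
    simp [hF, this]
  have hFsummable : ∀ i, Summable (F i) := by
    intro i
    rw [← (hinj i).summable_iff (f := F i)]
    · rw [Function.comp_def, ← hcomp i]; exact hsummand i
    · intro n hn
      have : ¬ i ≤ n := by
        intro hle
        exact hn ⟨n - i, show n - i + i = n by omega⟩
      simp [hF, this]
  have htsumF : ∀ i, (∑' j : ℕ, F i (j + i)) = ∑' n, F i n :=
    fun i => (hinj i).tsum_eq (hsupp i)
  calc ∑' n : ℕ, ((k + n).factorial : ℝ) / ((k.factorial : ℝ) * ((n.factorial : ℝ))^2) * x ^ n
      = ∑' n : ℕ, ∑ i ∈ Finset.range (k + 1), F i n := by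
        refine tsum_congr fun n => ?_
        rw [← key_sum k n x]
    _ = ∑ i ∈ Finset.range (k + 1), ∑' n, F i n :=
        Summable.tsum_finsetSum (fun i _ => hFsummable i)
    _ = ∑ i ∈ Finset.range (k + 1), ∑' j : ℕ, x ^ j / (j.factorial : ℝ)
          * ((k.factorial : ℝ) / (((k - i).factorial : ℝ) * ((i.factorial : ℝ))^2) * x ^ i) := by
        refine Finset.sum_congr rfl fun i _ => ?_
        rw [← htsumF i, ← hcomp i]
    _ = ∑ i ∈ Finset.range (k + 1), Real.exp x
          * ((k.factorial : ℝ) / (((k - i).factorial : ℝ) * ((i.factorial : ℝ))^2) * x ^ i) := by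
        refine Finset.sum_congr rfl fun i _ => ?_
        rw [tsum_mul_right, Real.exp_eq_exp_ℝ, NormedSpace.exp_eq_tsum_div]

    _ = Real.exp x * ∑ i ∈ Finset.range (k + 1),
          (k.factorial : ℝ) / (((k - i).factorial : ℝ) * ((i.factorial : ℝ))^2) * x ^ i := by
        rw [Finset.mul_sum]
end

section
/- Let m ≥ 1 be an integer and b, Ω > 0. If Y has density f(y) = (1/(2b))(2bm/(2bm+Ω))^m exp(−my/(2bm+Ω)) Σ_{i=0}^{m-1} (m-1)!/((m-1-i)!(i!)²) (Ωy/(2b(2bm+Ω)))^i on [0, ∞), then E[Y] = 2b + Ω. -/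
/-!
Pushing `P` forward along `Y` turns `E[Y]` into `∫₀^∞ y f(y) dy`. The density `f` is a finite
combination of gamma kernels `y^i e^{-μy}` with `μ = m / (2bm + Ω)`, whose first moments are
`(i+1)! / μ^(i+2)`. After this integration the coefficients collapse to
`C(m-1, i) (i+1) xⁱ` with `x = Ω / (2bm)`, and the binomial identity
`(∑ C(n,i) (i+1) xⁱ) (1 + x) = (1 + x)ⁿ (1 + (n+1) x)` together with `1 + x = (2bm + Ω) / (2bm)`
leaves `2b + Ω`.
-/

open Real Finset MeasureTheory Set
open scoped Nat

theorem sum_range_choose_mul_pow {R : Type*} [CommSemiring R] (n : ℕ) (x : R) :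
    ∑ i ∈ range (n + 1), (n.choose i : R) * x ^ i = (1 + x) ^ n := by
  rw [add_comm 1 x, add_pow]
  simp [mul_comm]

theorem sum_range_choose_mul_mul_pow {R : Type*} [CommSemiring R] (n : ℕ) (x : R) :
    ∑ i ∈ range (n + 2), ((n + 1).choose i : R) * i * x ^ i = (n + 1) * x * (1 + x) ^ n := by
  rw [sum_range_succ']
  simp only [Nat.cast_zero, mul_zero, zero_mul, add_zero]
  rw [← sum_range_choose_mul_pow, mul_sum]
  refine sum_congr rfl fun i _ => ?_
  have h := congrArg (Nat.cast : ℕ → R) (Nat.add_one_mul_choose_eq n i)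
  push_cast at h
  rw [pow_succ, Nat.cast_succ, ← h]
  ring

/-- Multiplied by `1 + x` so that no `(1 + x) ^ (n - 1)` with truncated subtraction appears. -/
theorem sum_range_choose_mul_succ_mul_pow_mul_one_add {R : Type*} [CommSemiring R] (n : ℕ)
    (x : R) :
    (∑ i ∈ range (n + 1), (n.choose i : R) * (i + 1) * x ^ i) * (1 + x)
      = (1 + x) ^ n * (1 + (n + 1) * x) := by
  have hsplit : ∑ i ∈ range (n + 1), (n.choose i : R) * (i + 1) * x ^ i
      = ∑ i ∈ range (n + 1), (n.choose i : R) * i * x ^ i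
        + ∑ i ∈ range (n + 1), (n.choose i : R) * x ^ i := by
    rw [← sum_add_distrib]
    exact sum_congr rfl fun i _ => by ring
  rw [hsplit, sum_range_choose_mul_pow]
  cases n with
  | zero => simp
  | succ k =>
    rw [sum_range_choose_mul_mul_pow]
    push_cast
    ring

theorem factorial_div_mul_sq_mul_factorial_succ {n i : ℕ} (hi : i ≤ n) :
    (n ! : ℝ) / ((n - i)! * (i ! : ℝ) ^ 2) * (i + 1)! = n.choose i * (i + 1) := by
  rw [Nat.cast_choose ℝ hi, Nat.factorial_succ]
  push_cast
  field_simp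

theorem setIntegral_Ioi_pow_mul_exp_neg_mul (k : ℕ) {r : ℝ} (hr : 0 < r) :
    ∫ y in Ioi (0 : ℝ), y ^ k * exp (-(r * y)) = k ! / r ^ (k + 1) := by
  have h := integral_rpow_mul_exp_neg_mul_Ioi (a := k + 1) (by positivity) hr
  simp_rw [add_sub_cancel_right, rpow_natCast] at h
  rw [h, Gamma_nat_eq_factorial, ← Nat.cast_succ, rpow_natCast, div_pow, one_pow,
    one_div_mul_eq_div]

theorem integrableOn_Ioi_pow_mul_exp_neg_mul (k : ℕ) {r : ℝ} (hr : 0 < r) :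
    IntegrableOn (fun y : ℝ => y ^ k * exp (-(r * y))) (Ioi 0) :=
  .of_integral_ne_zero (by rw [setIntegral_Ioi_pow_mul_exp_neg_mul k hr]; positivity)

theorem setIntegral_Ioi_const_mul_exp_neg_mul_sum_mul_id (A r β : ℝ) (hr : 0 < r)
    (s : Finset ℕ) (d : ℕ → ℝ) :
    ∫ y in Ioi (0 : ℝ), A * exp (-(r * y)) * (∑ i ∈ s, d i * (β * y) ^ i) * y
      = A / r ^ 2 * ∑ i ∈ s, d i * (i + 1)! * (β / r) ^ i := by
  have hterms : ∀ y : ℝ, A * exp (-(r * y)) * (∑ i ∈ s, d i * (β * y) ^ i) * y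
      = ∑ i ∈ s, A * d i * β ^ i * (y ^ (i + 1) * exp (-(r * y))) := by
    intro y
    rw [mul_sum, sum_mul]
    exact sum_congr rfl fun i _ => by ring
  simp_rw [hterms]
  rw [integral_finsetSum _ fun i _ => (integrableOn_Ioi_pow_mul_exp_neg_mul (i + 1) hr).const_mul _,
    mul_sum]
  refine sum_congr rfl fun i _ => ?_
  rw [integral_const_mul, setIntegral_Ioi_pow_mul_exp_neg_mul _ hr, div_pow]
  field_simp
  ring

theorem integral_eq_setIntegral_mul_of_map_eq_withDensity {α : Type*} [MeasurableSpace α]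
    {P : Measure α} {Y : α → ℝ} (hY : Measurable Y) {g : ℝ → ℝ} (hg : Measurable g) {s : Set ℝ}
    (hs : MeasurableSet s) (hg0 : ∀ y ∈ s, 0 ≤ g y)
    (hmap : P.map Y = volume.withDensity fun y => ENNReal.ofReal (s.indicator g y)) :
    ∫ ω, Y ω ∂P = ∫ y in s, g y * y := by
  refine (integral_map hY.aemeasurable aestronglyMeasurable_id).symm.trans ?_
  rw [hmap,
    integral_withDensity_eq_integral_toReal_smul (hg.indicator hs).ennreal_ofReal
      (ae_of_all _ fun _ => ENNReal.ofReal_lt_top), ← integral_indicator hs]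
  refine integral_congr_ae (ae_of_all _ fun y => ?_)
  simp only [ENNReal.toReal_ofReal (indicator_nonneg hg0 y), smul_eq_mul, indicator_mul_left, id]

noncomputable def ssrDensity (m : ℕ) (b Ω y : ℝ) : ℝ :=
  1 / (2 * b) * (2 * b * m / (2 * b * m + Ω)) ^ m * exp (-(m * y) / (2 * b * m + Ω))
    * ∑ i ∈ range m, ((m - 1)! : ℝ) / (((m - 1 - i)! : ℝ) * ((i ! : ℝ)) ^ 2)
      * (Ω * y / (2 * b * (2 * b * m + Ω))) ^ i

theorem ssrDensity_nonneg (m : ℕ) {b Ω y : ℝ} (hb : 0 < b) (hΩ : 0 < Ω) (hy : 0 ≤ y) :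
    0 ≤ ssrDensity m b Ω y := by
  unfold ssrDensity
  exact mul_nonneg (by positivity) (sum_nonneg fun i _ => by positivity)

theorem measurable_ssrDensity (m : ℕ) (b Ω : ℝ) : Measurable (ssrDensity m b Ω) := by
  unfold ssrDensity
  fun_prop

theorem ssrDensity_succ (n : ℕ) (b Ω y : ℝ) :
    ssrDensity (n + 1) b Ω y
      = 1 / (2 * b) * (2 * b * (n + 1) / (2 * b * (n + 1) + Ω)) ^ (n + 1)
        * exp (-((n + 1) / (2 * b * (n + 1) + Ω) * y))
        * ∑ i ∈ range (n + 1), (n ! : ℝ) / ((n - i)! * (i ! : ℝ) ^ 2)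
          * (Ω / (2 * b * (2 * b * (n + 1) + Ω)) * y) ^ i := by
  simp only [ssrDensity, Nat.add_sub_cancel]
  push_cast
  simp only [neg_div, mul_div_right_comm _ y]

theorem setIntegral_Ioi_ssrDensity_mul_id {m : ℕ} (hm : 1 ≤ m) {b Ω : ℝ} (hb : 0 < b)
    (hΩ : 0 < Ω) : ∫ y in Ioi (0 : ℝ), ssrDensity m b Ω y * y = 2 * b + Ω := by
  obtain ⟨n, rfl⟩ : ∃ n, m = n + 1 := ⟨m - 1, by omega⟩
  simp_rw [ssrDensity_succ]
  set M : ℝ := n + 1 with hMdef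
  set c := 2 * b * M + Ω with hcdef
  set x := Ω / (2 * b * M) with hxdef
  have hM : 0 < M := by positivity
  have hc : 0 < c := by positivity
  have hx0 : 0 < 1 + x := by positivity
  have h1x : 1 + x = c / (2 * b * M) := by rw [hcdef, hxdef]; field_simp
  rw [setIntegral_Ioi_const_mul_exp_neg_mul_sum_mul_id _ _ _ (by positivity),
    show Ω / (2 * b * c) / (M / c) = x by rw [hxdef]; field_simp,
    sum_congr rfl fun i hi => by
      rw [factorial_div_mul_sq_mul_factorial_succ (Nat.lt_succ_iff.mp (mem_range.mp hi))]]
  refine mul_right_cancel₀ hx0.ne' ?_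
  rw [mul_assoc, sum_range_choose_mul_succ_mul_pow_mul_one_add,
    show 1 + (n + 1) * x = (2 * b + Ω) / (2 * b) by rw [hxdef, hMdef]; field_simp,
    show 2 * b * M / c = (1 + x)⁻¹ by rw [h1x, inv_div]]
  field_simp
  have hpow : (1 / (1 + x)) ^ (n + 1) * (1 + x) ^ n = 1 / (1 + x) := by
    rw [div_pow, one_pow, pow_succ]
    field_simp
  rw [mul_right_comm, hpow, h1x]
  field_simp

theorem stmt9_general {α : Type*} [MeasurableSpace α] (P : Measure α)
    (m : ℕ) (hm : 1 ≤ m) (b Ω : ℝ) (hb : 0 < b) (hΩ : 0 < Ω)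
    (Y : α → ℝ) (hY : Measurable Y)
    (hpdf : Measure.map Y P = volume.withDensity (fun y => ENNReal.ofReal
      (Set.indicator (Set.Ici (0 : ℝ))
        (fun y => 1 / (2 * b) * (2 * b * m / (2 * b * m + Ω)) ^ m
          * Real.exp (-(m * y) / (2 * b * m + Ω))
          * ∑ i ∈ Finset.range m,
              ((m - 1).factorial : ℝ) / (((m - 1 - i).factorial : ℝ) * ((i.factorial : ℝ))^2)
                * (Ω * y / (2 * b * (2 * b * m + Ω))) ^ i) y))) :
    ∫ ω, Y ω ∂P = 2 * b + Ω := by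
  rw [integral_eq_setIntegral_mul_of_map_eq_withDensity hY (measurable_ssrDensity m b Ω)
      measurableSet_Ici (fun _ hy => ssrDensity_nonneg m hb hΩ hy) hpdf,
    integral_Ici_eq_integral_Ioi, setIntegral_Ioi_ssrDensity_mul_id hm hb hΩ]

theorem stmt9 {α : Type*} [MeasurableSpace α] (P : Measure α) [IsProbabilityMeasure P]
    (m : ℕ) (hm : 1 ≤ m) (b Ω : ℝ) (hb : 0 < b) (hΩ : 0 < Ω)
    (Y : α → ℝ) (hY : Measurable Y)
    (hpdf : Measure.map Y P = volume.withDensity (fun y => ENNReal.ofReal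
      (Set.indicator (Set.Ici (0 : ℝ))
        (fun y => 1 / (2 * b) * (2 * b * m / (2 * b * m + Ω)) ^ m
          * Real.exp (-(m * y) / (2 * b * m + Ω))
          * ∑ i ∈ Finset.range m,
              ((m - 1).factorial : ℝ) / (((m - 1 - i).factorial : ℝ) * ((i.factorial : ℝ))^2)
                * (Ω * y / (2 * b * (2 * b * m + Ω))) ^ i) y))) :
    ∫ ω, Y ω ∂P = 2 * b + Ω :=
  stmt9_general P m hm b Ω hb hΩ Y hY hpdf
end
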